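/- Let p ≤ q be integers of which exactly one is even. Then the block matrix M_{ρ(p,q)} of the string representation ρ(p,q) is bijective. -/

import Mathlib

/-!
Write `x_l` for the coefficient of `e_l` (`l` odd) in a vector of `⊕ V_{2i-1}`, with `x_l = 0`
for `l ∉ [p, q]`. The block matrix sends it to the vector whose `e_k`-coefficient (`k` even in
`[p, q]`) is `x_{k-1} - x_{k+1}`. When `p + q` is odd, one of `p - 1`, `q + 1` is odd and lies
outside `[p, q]`; starting there, the kernel equations force `x = 0` one step at a time. Both
sides have the same dimension because the reflection `l ↦ p + q - l` of `[p, q]` exchanges its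
odd and even points, so the injective block matrix is bijective.
-/

open Module

/-- A representation of the cyclic quiver `G_{2m}`: `W i` is the odd vertex space `V_{2i+1}`
(0-based, so `W 0 = V_1`), `U i` is the even vertex space `V_{2i+2}`,
`α i : V_{2i+1} → V_{2i+2}` and `β i : V_{2i+3} → V_{2i+2}` (indices of vertices mod `2m`). -/
structure QRep (κ : Type) [Field κ] (m : ℕ) [NeZero m] where
  W : Fin m → Type
  U : Fin m → Type
  [accW : ∀ i, AddCommGroup (W i)]
  [accU : ∀ i, AddCommGroup (U i)]
  [modW : ∀ i, Module κ (W i)]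
  [modU : ∀ i, Module κ (U i)]
  [fdW : ∀ i, FiniteDimensional κ (W i)]
  [fdU : ∀ i, FiniteDimensional κ (U i)]
  α : ∀ i, W i →ₗ[κ] U i
  β : ∀ i, W (i + 1) →ₗ[κ] U i

attribute [instance] QRep.accW QRep.accU QRep.modW QRep.modU QRep.fdW QRep.fdU

namespace QRep

variable {κ : Type} [Field κ] {m : ℕ} [NeZero m]

/-- The block matrix `M_ρ : ⊕ V_{2i-1} → ⊕ V_{2i}`,
`M_ρ(v₁, v₃, …) = (α₁v₁ − β₁v₃, α₂v₃ − β₂v₅, …, α_m v_{2m−1} − β_m v₁)`. -/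
def blockMap (ρ : QRep κ m) : (∀ i, ρ.W i) →ₗ[κ] ∀ i, ρ.U i :=
  LinearMap.pi fun i => (ρ.α i).comp (LinearMap.proj i) - (ρ.β i).comp (LinearMap.proj (i + 1))

/-- Direct sum of two representations. -/
def dsum (ρ σ : QRep κ m) : QRep κ m where
  W i := ρ.W i × σ.W i
  U i := ρ.U i × σ.U i
  α i := (ρ.α i).prodMap (σ.α i)
  β i := (ρ.β i).prodMap (σ.β i)

/-- Direct sum of a finite family of representations. -/
def dsumFin {N : ℕ} (f : Fin N → QRep κ m) : QRep κ m where
  W i := ∀ j, (f j).W i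
  U i := ∀ j, (f j).U i
  α i := LinearMap.pi fun j => ((f j).α i).comp (LinearMap.proj j)
  β i := LinearMap.pi fun j => ((f j).β i).comp (LinearMap.proj j)

/-- An isomorphism of representations. -/
structure Iso (ρ σ : QRep κ m) where
  φW : ∀ i, ρ.W i ≃ₗ[κ] σ.W i
  φU : ∀ i, ρ.U i ≃ₗ[κ] σ.U i
  commα : ∀ i x, φU i (ρ.α i x) = σ.α i (φW i x)
  commβ : ∀ i x, φU i (ρ.β i x) = σ.β i (φW (i + 1) x)

def IsIsomorphic (ρ σ : QRep κ m) : Prop := Nonempty (Iso ρ σ)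

/-- A representation is nontrivial if some vertex space is nonzero. -/
def NontrivialRep (ρ : QRep κ m) : Prop :=
  (∃ i, Nontrivial (ρ.W i)) ∨ (∃ i, Nontrivial (ρ.U i))

/-- A representation is indecomposable if it is nontrivial and not isomorphic to a direct
sum of two nontrivial representations. -/
def Indecomposable (ρ : QRep κ m) : Prop :=
  ρ.NontrivialRep ∧ ∀ σ τ : QRep κ m, σ.NontrivialRep → τ.NontrivialRep →
    ¬ ρ.IsIsomorphic (σ.dsum τ)

end QRep

namespace QRep

open Fin.NatCast Fin.CommRing

variable {κ : Type} [Field κ] {m : ℕ} [NeZero m]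

/-- Transport of an odd vertex space along an equality of indices (linear map version). -/
def castW (ρ : QRep κ m) {a b : Fin m} (h : a = b) : ρ.W a →ₗ[κ] ρ.W b := by
  subst h; exact LinearMap.id

/-- Transport of an odd vertex space along an equality of indices (equiv version). -/
def castWE (ρ : QRep κ m) {a b : Fin m} (h : a = b) : ρ.W a ≃ₗ[κ] ρ.W b := by
  subst h; exact LinearEquiv.refl κ _

/-- Iterated composite of the maps `g i : W i → W (i+1)`, `n` steps starting at vertex `i`. -/
def cyclicComp (ρ : QRep κ m) (g : ∀ i, ρ.W i →ₗ[κ] ρ.W (i + 1)) :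
    (n : ℕ) → ∀ i : Fin m, ρ.W i →ₗ[κ] ρ.W (i + (n : Fin m))
  | 0, i => ρ.castW (by simp)
  | n + 1, i =>
      (ρ.castW (show i + (n : Fin m) + 1 = i + ((n + 1 : ℕ) : Fin m) by push_cast; ring)).comp
        ((g (i + (n : Fin m))).comp (cyclicComp ρ g n i))

/-- The monodromy `T = β_m⁻¹ ∘ α_m ∘ ⋯ ∘ β_1⁻¹ ∘ α_1 : V_1 → V_1`, where
`g i = β i⁻¹ ∘ α i` is given as data. -/
def monodromy (ρ : QRep κ m) (g : ∀ i, ρ.W i →ₗ[κ] ρ.W (i + 1)) : ρ.W 0 →ₗ[κ] ρ.W 0 :=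
  (ρ.castW (show (0 : Fin m) + (m : Fin m) = 0 by simp [Fin.natCast_self])).comp
    (cyclicComp ρ g m 0)

/-- Iterated composite of the equivalences `e i : W i ≃ W (i+1)`, `n` steps starting at `i`. -/
def cyclicCompE (ρ : QRep κ m) (e : ∀ i, ρ.W i ≃ₗ[κ] ρ.W (i + 1)) :
    (n : ℕ) → ∀ i : Fin m, ρ.W i ≃ₗ[κ] ρ.W (i + (n : Fin m))
  | 0, i => ρ.castWE (by simp)
  | n + 1, i =>
      ((cyclicCompE ρ e n i).trans (e (i + (n : Fin m)))).trans
        (ρ.castWE (show i + (n : Fin m) + 1 = i + ((n + 1 : ℕ) : Fin m) by push_cast; ring))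

/-- `T_i`, the monodromy based at the odd vertex `V_{2i+1}` (so `Ti e 0` is `T_m = T`). -/
def Ti (ρ : QRep κ m) (e : ∀ i, ρ.W i ≃ₗ[κ] ρ.W (i + 1)) (i : Fin m) : ρ.W i ≃ₗ[κ] ρ.W i :=
  (cyclicCompE ρ e m i).trans (ρ.castWE (show i + (m : Fin m) = i by simp [Fin.natCast_self]))

/-- `C_i = g_i ∘ ⋯ ∘ g_1 : V_1 → V_{2i+1}`. -/
def Ci (ρ : QRep κ m) (e : ∀ i, ρ.W i ≃ₗ[κ] ρ.W (i + 1)) (i : Fin m) : ρ.W 0 ≃ₗ[κ] ρ.W i :=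
  (cyclicCompE ρ e (i : ℕ) 0).trans
    (ρ.castWE (show (0 : Fin m) + ((i : ℕ) : Fin m) = i by simp [Fin.cast_val_eq_self]))

end QRep

/-- Index set of the basis vectors `e_l`, `p ≤ l ≤ q`, `l ≡ j (mod 2m)`,
of a vertex space of the string representation `ρ(p,q)`. -/
noncomputable def strIdx (m : ℕ) (p q : ℤ) (j : ZMod (2 * m)) : Finset ℤ :=
  (Finset.Icc p q).filter fun l => ((l : ZMod (2 * m)) = j)

/-- The linear map sending the basis vector `e_l` (`l ∈ T`) to the coordinate `l + d` (if present):
in matrix terms, the map whose `(l', l)` entry is `1` iff `l' + d = l`. -/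
def eMap (κ : Type) [Field κ] (S T : Finset ℤ) (d : ℤ) : (S → κ) →ₗ[κ] T → κ where
  toFun f l := if h : ((l : ℤ) + d) ∈ S then f ⟨(l : ℤ) + d, h⟩ else 0
  map_add' f g := by
    funext l
    by_cases h : ((l : ℤ) + d) ∈ S <;> simp [h]
  map_smul' c f := by
    funext l
    by_cases h : ((l : ℤ) + d) ∈ S <;> simp [h]

/-- The string representation `ρ(p,q)`: the vertex space at vertex `j` has basis
`{e_l : p ≤ l ≤ q, l ≡ j (mod 2m)}`, `α` sends `e_l` to `e_{l+1}` if `l+1 ≤ q` (else `0`),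
and `β` sends `e_l` to `e_{l−1}` if `l−1 ≥ p` (else `0`). -/
noncomputable def strRep (κ : Type) [Field κ] (m : ℕ) [NeZero m] (p q : ℤ) : QRep κ m where
  W i := strIdx m p q ((2 * (i : ℕ) + 1 : ℕ)) → κ
  U i := strIdx m p q ((2 * (i : ℕ) + 2 : ℕ)) → κ
  α _ := eMap κ _ _ (-1)
  β _ := eMap κ _ _ 1

/-- The `k × k` Jordan block `J(λ,k)`: `λ` on the diagonal, `1` on the superdiagonal. -/
def jordanMatrix (κ : Type) [Field κ] (lam : κ) (k : ℕ) : Matrix (Fin k) (Fin k) κ :=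
  Matrix.of fun a b => if b = a then lam else if (b : ℕ) = (a : ℕ) + 1 then (1 : κ) else 0

/-- The Jordan-cell representation `ρ^J(λ,k)`: every vertex space is `κ^k`, `α_1 = J(λ,k)`,
and all other maps are the identity. -/
def jordanRep (κ : Type) [Field κ] (m : ℕ) [NeZero m] (lam : κ) (k : ℕ) : QRep κ m where
  W _ := Fin k → κ
  U _ := Fin k → κ
  α i := if i = 0 then (jordanMatrix κ lam k).mulVecLin else LinearMap.id
  β _ := LinearMap.id

open Finset

namespace Int

variable {M : Type*} [Zero M] {p q : ℤ} {c : ℤ → M}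

theorem card_filter_even_Icc_eq_card_filter_odd (h : Odd (p + q)) :
    #((Icc p q).filter Even) = #((Icc p q).filter Odd) := by
  refine card_bij' (fun l _ => p + q - l) (fun l _ => p + q - l) ?_ ?_ ?_ ?_
  · intro l hl
    simp only [mem_filter, mem_Icc] at hl ⊢
    exact ⟨⟨by omega, by omega⟩, h.sub_even hl.2⟩
  · intro l hl
    simp only [mem_filter, mem_Icc] at hl ⊢
    exact ⟨⟨by omega, by omega⟩, h.sub_odd hl.2⟩
  all_goals intros; ring

theorem apply_odd_eq_zero_of_even_left (hout : ∀ l ∉ Icc p q, c l = 0)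
    (hstep : ∀ k ∈ Icc p q, Even k → c (k - 1) = c (k + 1)) (hp : Even p)
    {l : ℤ} (hl : Odd l) : c l = 0 := by
  have hrun : ∀ n : ℕ, c (p - 1 + 2 * n) = 0 := by
    intro n
    induction n with
    | zero => exact hout _ (by simp [mem_Icc])
    | succ n ih =>
      by_cases hk : p + 2 * n ≤ q
      · have := hstep (p + 2 * n) (mem_Icc.2 ⟨by omega, hk⟩) (hp.add (even_two_mul _))
        rw [show p - 1 + 2 * ↑(n + 1) = p + 2 * n + 1 by push_cast; ring, ← this]
        convert ih using 2
        ring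
      · exact hout _ (by simp only [mem_Icc]; omega)
  obtain ⟨a, rfl⟩ := hl
  obtain ⟨b, rfl⟩ := hp
  by_cases hlp : 2 * a + 1 < b + b
  · exact hout _ (by simp only [mem_Icc]; omega)
  · convert hrun (a - b + 1).toNat using 2
    omega

theorem apply_odd_eq_zero_of_odd_add (hout : ∀ l ∉ Icc p q, c l = 0)
    (hstep : ∀ k ∈ Icc p q, Even k → c (k - 1) = c (k + 1)) (h : Odd (p + q))
    {l : ℤ} (hl : Odd l) : c l = 0 := by
  by_cases hp : Even p
  · exact apply_odd_eq_zero_of_even_left hout hstep hp hl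
  have hq : Even q := by
    rw [Int.not_even_iff_odd] at hp
    simpa [Int.odd_add, hp] using h
  -- run the argument for `l ↦ c (-l)` on `[-q, -p]`, whose left end is even
  have := apply_odd_eq_zero_of_even_left (c := fun l => c (-l)) (p := -q) (q := -p)
    (fun l hl => hout _ (by simp only [mem_Icc] at hl ⊢; omega))
    (fun k hk hk' => by
      simpa [neg_add_eq_sub, neg_sub', sub_neg_eq_add] using
        (hstep (-k) (by simp only [mem_Icc] at hk ⊢; omega) hk'.neg).symm)
    hq.neg hl.neg
  simpa using this

end Int

namespace ZMod

variable {m : ℕ}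

theorem even_iff_of_intCast_eq_natCast {l : ℤ} {c : ℕ} (h : (l : ZMod (2 * m)) = c) :
    Even l ↔ Even (c : ℤ) := by
  rw [← Int.cast_natCast, intCast_eq_intCast_iff_dvd_sub] at h
  have h2 : (2 : ℤ) ∣ c - l := (dvd_mul_right 2 (m : ℤ)).trans (by exact_mod_cast h)
  exact (Int.even_sub.1 (even_iff_two_dvd.2 h2)).symm

theorem natCast_two_mul_val_add_injective (a : ℕ) :
    Function.Injective fun i : Fin m => ((2 * (i : ℕ) + a : ℕ) : ZMod (2 * m)) := by
  intro i j h
  simp only [Nat.cast_add, add_left_inj, natCast_eq_natCast_iff'] at h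
  rw [Nat.mod_eq_of_lt (by omega), Nat.mod_eq_of_lt (by omega)] at h
  omega

theorem natCast_two_mul_val_add_one [NeZero m] (i : Fin m) :
    ((2 * ((i + 1 : Fin m) : ℕ) : ℕ) : ZMod (2 * m)) =
      ((2 * (i : ℕ) + 2 : ℕ) : ZMod (2 * m)) := by
  rw [Fin.val_add, Fin.val_one', Nat.add_mod_mod, ← Nat.mul_mod_mul_left, natCast_mod,
    mul_add_one]

theorem odd_iff_exists_natCast_two_mul_add_one [NeZero m] {l : ℤ} :
    Odd l ↔ ∃ i : Fin m, (l : ZMod (2 * m)) = ((2 * (i : ℕ) + 1 : ℕ) : ZMod (2 * m)) := by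
  constructor
  · intro hl
    set r := (l : ZMod (2 * m)).val
    have hr : (r : ZMod (2 * m)) = l := natCast_zmod_val _
    have hrm : r < 2 * m := val_lt _
    have hro : Odd r := by
      rw [← Int.not_even_iff_odd, even_iff_of_intCast_eq_natCast hr.symm] at hl
      exact_mod_cast Int.not_even_iff_odd.1 hl
    rw [Nat.odd_iff] at hro
    exact ⟨⟨r / 2, by omega⟩, by rw [← hr]; congr 1; dsimp only; omega⟩
  · rintro ⟨i, hi⟩
    rw [← Int.not_even_iff_odd, even_iff_of_intCast_eq_natCast hi]
    exact Int.not_even_iff_odd.2 (by exact_mod_cast odd_two_mul_add_one (i : ℕ))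

theorem even_iff_exists_natCast_two_mul_add_two [NeZero m] {l : ℤ} :
    Even l ↔ ∃ i : Fin m, (l : ZMod (2 * m)) = ((2 * (i : ℕ) + 2 : ℕ) : ZMod (2 * m)) := by
  constructor
  · intro hl
    set r := (l : ZMod (2 * m)).val
    have hr : (r : ZMod (2 * m)) = l := natCast_zmod_val _
    have hrm : r < 2 * m := val_lt _
    have hre : Even r := by
      rw [even_iff_of_intCast_eq_natCast hr.symm] at hl
      exact_mod_cast hl
    rw [Nat.even_iff] at hre
    rcases Nat.eq_zero_or_pos r with hr0 | hr0
    · -- the residue `0` is `2 * (m - 1) + 2 = 2 * m`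
      refine ⟨⟨m - 1, by omega⟩, ?_⟩
      rw [← hr, hr0, show 2 * (m - 1) + 2 = 2 * m by omega, natCast_self, Nat.cast_zero]
    · exact ⟨⟨r / 2 - 1, by omega⟩, by rw [← hr]; congr 1; dsimp only; omega⟩
  · rintro ⟨i, hi⟩
    rw [even_iff_of_intCast_eq_natCast hi]
    push_cast
    exact ⟨(i : ℤ) + 1, by ring⟩

end ZMod

section strIdx

variable {m : ℕ} {p q : ℤ}

theorem mem_strIdx {l : ℤ} {j : ZMod (2 * m)} :
    l ∈ strIdx m p q j ↔ l ∈ Icc p q ∧ (l : ZMod (2 * m)) = j :=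
  mem_filter

theorem sum_card_strIdx_eq_card_filter {ι : Type*} [Fintype ι] {c : ι → ZMod (2 * m)}
    (hc : Function.Injective c) {P : ℤ → Prop} [DecidablePred P]
    (hP : ∀ l, P l ↔ ∃ i, (l : ZMod (2 * m)) = c i) :
    ∑ i, #(strIdx m p q (c i)) = #((Icc p q).filter P) := by
  rw [← card_sigma]
  refine card_bij (fun a _ => a.2) ?_ ?_ ?_
  · rintro ⟨i, l⟩ hl
    obtain ⟨hI, hres⟩ := mem_strIdx.1 (mem_sigma.1 hl).2
    exact mem_filter.2 ⟨hI, (hP l).2 ⟨i, hres⟩⟩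
  · rintro ⟨i, l⟩ hl ⟨j, l'⟩ hl' (rfl : l = l')
    obtain rfl : i = j :=
      hc ((mem_strIdx.1 (mem_sigma.1 hl).2).2.symm.trans (mem_strIdx.1 (mem_sigma.1 hl').2).2)
    rfl
  · intro l hl
    obtain ⟨hI, hPl⟩ := mem_filter.1 hl
    obtain ⟨i, hi⟩ := (hP l).1 hPl
    exact ⟨⟨i, l⟩, mem_sigma.2 ⟨mem_univ _, mem_strIdx.2 ⟨hI, hi⟩⟩, rfl⟩

end strIdx

namespace strRep

variable {κ : Type} [Field κ] {m : ℕ} [NeZero m] {p q : ℤ}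

theorem finrank_W : finrank κ (∀ i, (strRep κ m p q).W i) = #((Icc p q).filter Odd) := by
  rw [finrank_pi_fintype, ← sum_card_strIdx_eq_card_filter (p := p) (q := q)
    (ZMod.natCast_two_mul_val_add_injective (m := m) 1)
    fun _ => ZMod.odd_iff_exists_natCast_two_mul_add_one]
  exact sum_congr rfl fun i _ => (finrank_fintype_fun_eq_card κ).trans (Fintype.card_coe _)

theorem finrank_U : finrank κ (∀ i, (strRep κ m p q).U i) = #((Icc p q).filter Even) := by
  rw [finrank_pi_fintype, ← sum_card_strIdx_eq_card_filter (p := p) (q := q)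
    (ZMod.natCast_two_mul_val_add_injective (m := m) 2)
    fun _ => ZMod.even_iff_exists_natCast_two_mul_add_two]
  exact sum_congr rfl fun i _ => (finrank_fintype_fun_eq_card κ).trans (Fintype.card_coe _)

/-- The coefficient of `e_l` in `v`; at most one odd vertex carries `e_l`, so at most one
summand is nonzero. -/
noncomputable def coord (v : ∀ i, (strRep κ m p q).W i) (l : ℤ) : κ :=
  ∑ i : Fin m, if h : l ∈ strIdx m p q ((2 * (i : ℕ) + 1 : ℕ)) then v i ⟨l, h⟩ else 0

theorem coord_eq_of_mem (v : ∀ i, (strRep κ m p q).W i) {i : Fin m} {l : ℤ}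
    (h : l ∈ strIdx m p q ((2 * (i : ℕ) + 1 : ℕ))) : coord v l = v i ⟨l, h⟩ := by
  have hother : ∀ j ≠ i, l ∉ strIdx m p q ((2 * (j : ℕ) + 1 : ℕ)) := fun j hji hj =>
    hji (ZMod.natCast_two_mul_val_add_injective 1
      ((mem_strIdx.1 hj).2.symm.trans (mem_strIdx.1 h).2))
  rw [coord, sum_eq_single i (fun j _ hji => dif_neg (hother j hji)) (by simp), dif_pos h]

theorem coord_eq_zero_of_notMem (v : ∀ i, (strRep κ m p q).W i) {l : ℤ} (h : l ∉ Icc p q) :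
    coord v l = 0 :=
  Finset.sum_eq_zero fun _ _ => dif_neg fun hl => h (mem_strIdx.1 hl).1

theorem dite_mem_eq_coord (v : ∀ i, (strRep κ m p q).W i) {i : Fin m} {l : ℤ}
    (h : (l : ZMod (2 * m)) = ((2 * (i : ℕ) + 1 : ℕ) : ZMod (2 * m))) :
    (if h' : l ∈ strIdx m p q ((2 * (i : ℕ) + 1 : ℕ)) then v i ⟨l, h'⟩ else 0) =
      coord v l := by
  split_ifs with h'
  · exact (coord_eq_of_mem v h').symm
  · exact (coord_eq_zero_of_notMem v fun hI => h' (mem_strIdx.2 ⟨hI, h⟩)).symm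

theorem blockMap_apply (v : ∀ i, (strRep κ m p q).W i) {i : Fin m} {k : ℤ}
    (hk : k ∈ strIdx m p q ((2 * (i : ℕ) + 2 : ℕ))) :
    (strRep κ m p q).blockMap v i ⟨k, hk⟩ = coord v (k - 1) - coord v (k + 1) := by
  have hres := (mem_strIdx.1 hk).2
  change
    (if h : k - 1 ∈ strIdx m p q ((2 * (i : ℕ) + 1 : ℕ)) then v i ⟨k - 1, h⟩ else 0) -
      (if h : k + 1 ∈ strIdx m p q ((2 * ((i + 1 : Fin m) : ℕ) + 1 : ℕ)) then
        v (i + 1) ⟨k + 1, h⟩ else 0) = _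
  rw [dite_mem_eq_coord v, dite_mem_eq_coord v]
  · rw [Nat.cast_add _ 1, ZMod.natCast_two_mul_val_add_one, Int.cast_add, hres, Int.cast_one,
      Nat.cast_one]
  · rw [Int.cast_sub, hres, Int.cast_one]
    push_cast; ring

theorem blockMap_injective (h : Odd (p + q)) :
    Function.Injective (strRep κ m p q).blockMap := by
  rw [← LinearMap.ker_eq_bot, LinearMap.ker_eq_bot']
  intro v hv
  have hstep : ∀ k ∈ Icc p q, Even k → coord v (k - 1) = coord v (k + 1) := by
    intro k hk hke
    obtain ⟨i, hi⟩ := (ZMod.even_iff_exists_natCast_two_mul_add_two (m := m)).1 hke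
    have hmem : k ∈ strIdx m p q ((2 * (i : ℕ) + 2 : ℕ)) := mem_strIdx.2 ⟨hk, hi⟩
    rw [← sub_eq_zero, ← blockMap_apply v hmem, hv]
    rfl
  funext i x
  change v i x = 0
  rw [← coord_eq_of_mem v x.2]
  exact Int.apply_odd_eq_zero_of_odd_add (fun _ hl => coord_eq_zero_of_notMem v hl) hstep h
    (ZMod.odd_iff_exists_natCast_two_mul_add_one.2 ⟨i, (mem_strIdx.1 x.2).2⟩)

end strRep

theorem strRep_blockMap_mixed_parity_general {κ : Type} [Field κ] {m : ℕ} [NeZero m]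
    (p q : ℤ) (hparity : (Even p ∧ Odd q) ∨ (Odd p ∧ Even q)) :
    Function.Bijective (strRep κ m p q).blockMap := by
  have hodd : Odd (p + q) := by
    rcases hparity with ⟨hp, hq⟩ | ⟨hp, hq⟩
    exacts [hp.add_odd hq, hp.add_even hq]
  have hinj := strRep.blockMap_injective (κ := κ) (m := m) hodd
  refine ⟨hinj, (LinearMap.injective_iff_surjective_of_finrank_eq_finrank ?_).mp hinj⟩
  rw [strRep.finrank_W, strRep.finrank_U, Int.card_filter_even_Icc_eq_card_filter_odd hodd]

/-- For `p ≤ q` with exactly one of `p`, `q` even, the block matrix of the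
string representation `ρ(p,q)` is bijective. -/
theorem strRep_blockMap_mixed_parity {κ : Type} [Field κ] {m : ℕ} [NeZero m]
    (p q : ℤ) (hpq : p ≤ q) (hparity : (Even p ∧ Odd q) ∨ (Odd p ∧ Even q)) :
    Function.Bijective (strRep κ m p q).blockMap :=
  strRep_blockMap_mixed_parity_general p q hparity
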